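/- Let (a_1,…,a_m) be a telescopic sequence, S the numerical semigroup it generates, and let w_1 < w_2 < ⋯ < w_g be the gaps (the elements of ℤ_{≥0} \ S), where g ≥ 1. Then the largest gap satisfies w_g = 2g − 1. -/

import Mathlib

/-!
With `c_j = d_{j-1}/d_j`, every integer `z` has a unique normal form
`z = a_1 t + ∑_{j ≥ 2} a_j x_j` with `t ∈ ℤ` and `0 ≤ x_j < c_j`: uniqueness is a descent through
the congruences modulo `d_{j-1}`, and existence follows because `∏ c_j = a_1` counts the residues
modulo `a_1`. The telescopic condition `c_j a_j ∈ ⟨a_1, …, a_{j-1}⟩` lets one reduce any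
representation in `S` to normal form, so `z ∈ S` iff `t ≥ 0`. Complementing every digit,
`x_j ↦ c_j - 1 - x_j`, and `t ↦ -1 - t` shows that `z ∈ S` iff `N - z ∉ S`, where
`N = ∑_{j ≥ 2} a_j (c_j - 1) - a_1`. So `S` is symmetric: `n ↦ N - n` exchanges the gaps and the
elements of `S` in `[0, N]`, whence `N + 1 = 2g` and `N` is the largest gap.
-/

/-- `dseq a i = gcd(a_1, …, a_i)`. -/
def dseq (a : ℕ → ℕ) (i : ℕ) : ℕ := (Finset.Icc 1 i).gcd a

/-- The telescopic condition:
`a_i/d_i ∈ (a_1/d_{i-1})ℤ_{≥0} + ⋯ + (a_{i-1}/d_{i-1})ℤ_{≥0}` for `2 ≤ i ≤ m`. -/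
def Telescopic (m : ℕ) (a : ℕ → ℕ) : Prop :=
  ∀ i, 2 ≤ i → i ≤ m →
    ∃ k : ℕ → ℕ,
      a i / dseq a i = ∑ j ∈ Finset.Icc 1 (i - 1), (a j / dseq a (i - 1)) * k j

open Finset

lemma two_mul_ncard_eq_of_mem_iff_sub_notMem {G : Set ℕ} {N : ℕ} (hle : ∀ n ∈ G, n ≤ N)
    (hsymm : ∀ n ≤ N, n ∈ G ↔ N - n ∉ G) : 2 * G.ncard = N + 1 := by
  classical
  have hG : G = ↑((range (N + 1)).filter (· ∈ G)) := by
    ext n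
    simpa [Nat.lt_succ_iff] using hle n
  have hcard : ((range (N + 1)).filter (· ∈ G)).card = ((range (N + 1)).filter (· ∉ G)).card := by
    refine card_nbij' (N - ·) (N - ·) ?_ ?_ ?_ ?_ <;> intro n hn <;>
      simp only [coe_filter, mem_range, Set.mem_ofPred_eq, Nat.lt_succ_iff] at hn ⊢
    · exact ⟨Nat.sub_le N n, (hsymm n hn.1).1 hn.2⟩
    · exact ⟨Nat.sub_le N n, not_not.1 fun h => hn.2 ((hsymm n hn.1).2 h)⟩
    all_goals exact Nat.sub_sub_self hn.1
  rw [hG, Set.ncard_coe_finset, two_mul]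
  nth_rw 2 [hcard]
  rw [card_filter_add_card_filter_not, card_range]

lemma isGreatest_two_mul_ncard_sub_one {P : ℤ → Prop} (N : ℤ) (hsymm : ∀ z, P z ↔ ¬ P (N - z))
    (hnonneg : ∀ z, P z → 0 ≤ z) (hzero : P 0) (hne : {n : ℕ | ¬ P n}.Nonempty) :
    IsGreatest {n : ℕ | ¬ P n} (2 * {n : ℕ | ¬ P n}.ncard - 1) := by
  have hmem : ∀ n : ℕ, n ∈ {n : ℕ | ¬ P n} ↔ P (N - n) := fun n => by
    rw [Set.mem_ofPred_eq, hsymm n, not_not]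
  obtain ⟨n₀, hn₀⟩ := hne
  obtain ⟨K, rfl⟩ := Int.eq_ofNat_of_zero_le (a := N) <| by
    have := hnonneg _ ((hmem n₀).1 hn₀)
    omega
  have hle : ∀ n ∈ {n : ℕ | ¬ P n}, n ≤ K := fun n hn => by
    have := hnonneg _ ((hmem n).1 hn)
    omega
  have hcard := two_mul_ncard_eq_of_mem_iff_sub_notMem hle fun n hn => by
    rw [hmem, Set.mem_ofPred_eq, not_not, Nat.cast_sub hn]
  rw [show 2 * {n : ℕ | ¬ P n}.ncard - 1 = K by omega]
  exact ⟨(hmem K).2 (by simpa using hzero), hle⟩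

lemma sum_Icc_one_eq_add {M : Type*} [AddCommMonoid M] (f : ℕ → M) {m : ℕ} (hm : 1 ≤ m) :
    ∑ i ∈ Icc 1 m, f i = f 1 + ∑ i ∈ Icc 2 m, f i := by
  rw [← insert_Icc_add_one_left_eq_Icc hm, sum_insert (by simp)]
  rfl

section

variable (a : ℕ → ℕ)

lemma dseq_one : dseq a 1 = a 1 := by
  simp [dseq]

lemma dseq_dvd {i j : ℕ} (hj : j ∈ Icc 1 i) : dseq a i ∣ a j :=
  Finset.gcd_dvd hj

lemma dseq_dvd_dseq {i i' : ℕ} (h : i ≤ i') : dseq a i' ∣ dseq a i :=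
  Finset.dvd_gcd fun _ hj => Finset.gcd_dvd (Icc_subset_Icc_right h hj)

lemma dseq_succ {i : ℕ} (hi : 1 ≤ i) : dseq a (i + 1) = Nat.gcd (a (i + 1)) (dseq a i) := by
  rw [dseq, ← insert_Icc_right_eq_Icc_add_one (by omega), Finset.gcd_insert]
  rfl

variable {a}

lemma dseq_pos (ha : 0 < a 1) {i : ℕ} (hi : 1 ≤ i) : 0 < dseq a i :=
  Nat.pos_of_dvd_of_pos (dseq_one a ▸ dseq_dvd_dseq a hi) ha

end

def dseqRatio (a : ℕ → ℕ) (j : ℕ) : ℕ := dseq a (j - 1) / dseq a j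

section

variable {a : ℕ → ℕ}

lemma dseqRatio_mul_dseq {j : ℕ} (hj : 2 ≤ j) : dseqRatio a j * dseq a j = dseq a (j - 1) :=
  Nat.div_mul_cancel (dseq_dvd_dseq a (by omega))

lemma dseqRatio_pos (ha : 0 < a 1) {j : ℕ} (hj : 2 ≤ j) : 0 < dseqRatio a j :=
  Nat.pos_of_ne_zero fun h =>
    (dseq_pos ha (by omega : 1 ≤ j - 1)).ne' (by rw [← dseqRatio_mul_dseq hj, h, zero_mul])

lemma prod_dseqRatio_mul_dseq {i : ℕ} (hi : 1 ≤ i) :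
    (∏ j ∈ Icc 2 i, dseqRatio a j) * dseq a i = a 1 := by
  induction i, hi using Nat.le_induction with
  | base => simp [dseq_one]
  | succ i hi ih =>
    rw [prod_Icc_succ_top (by omega), mul_assoc, dseqRatio_mul_dseq (by omega),
      Nat.add_sub_cancel, ih]

end

def IsReducedCoeffs (m : ℕ) (a x : ℕ → ℕ) : Prop := ∀ j ∈ Icc 2 m, x j < dseqRatio a j

lemma IsReducedCoeffs.mono {m i : ℕ} {a x : ℕ → ℕ} (hx : IsReducedCoeffs m a x) (h : i ≤ m) :
    IsReducedCoeffs i a x :=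
  fun j hj => hx j (Icc_subset_Icc_right h hj)

section

variable {m : ℕ} {a : ℕ → ℕ}

lemma Telescopic.exists_dseqRatio_mul_eq_sum (htel : Telescopic m a) {i : ℕ} (hi : 2 ≤ i)
    (him : i ≤ m) : ∃ k : ℕ → ℕ, dseqRatio a i * a i = ∑ j ∈ Icc 1 (i - 1), a j * k j := by
  obtain ⟨k, hk⟩ := htel i hi him
  refine ⟨k, ?_⟩
  calc dseqRatio a i * a i = dseq a (i - 1) * (a i / dseq a i) := by
        rw [← dseqRatio_mul_dseq hi, mul_assoc,
          Nat.mul_div_cancel' (dseq_dvd a (mem_Icc.2 ⟨by omega, le_rfl⟩))]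
    _ = ∑ j ∈ Icc 1 (i - 1), a j * k j := by
        rw [hk, mul_sum]
        refine sum_congr rfl fun j hj => ?_
        rw [← mul_assoc, Nat.mul_div_cancel' (dseq_dvd a hj)]

lemma Telescopic.exists_isReducedCoeffs_sum_eq (htel : Telescopic m a) (ha : 0 < a 1) {i : ℕ}
    (hi : i ≤ m) (x : ℕ → ℕ) :
    ∃ y, IsReducedCoeffs i a y ∧ ∑ j ∈ Icc 1 i, a j * y j = ∑ j ∈ Icc 1 i, a j * x j := by
  induction i generalizing x with
  | zero => exact ⟨x, fun j hj => by simp at hj, rfl⟩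
  | succ i ih =>
    rcases Nat.eq_zero_or_pos i with rfl | hi1
    · exact ⟨x, fun j hj => by simp at hj, rfl⟩
    obtain ⟨k, hk⟩ := htel.exists_dseqRatio_mul_eq_sum (i := i + 1) (by omega) hi
    rw [Nat.add_sub_cancel] at hk
    set c := dseqRatio a (i + 1)
    -- `x_{i+1} = c q + r`, and `a_{i+1} c q` is absorbed by the lower generators
    obtain ⟨y, hy, hsum⟩ := ih (by omega) fun j => x j + x (i + 1) / c * k j
    refine ⟨Function.update y (i + 1) (x (i + 1) % c), fun j hj => ?_, ?_⟩
    · rcases (mem_Icc.1 hj).2.eq_or_lt with rfl | hlt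
      · simpa using Nat.mod_lt _ (dseqRatio_pos ha (by omega))
      · rw [Function.update_of_ne (by omega)]
        exact hy j (mem_Icc.2 ⟨(mem_Icc.1 hj).1, by omega⟩)
    · rw [sum_Icc_succ_top (by omega), sum_Icc_succ_top (by omega), Function.update_self,
        sum_congr rfl fun j hj => by rw [Function.update_of_ne (by simp at hj; omega)], hsum]
      simp only [mul_add, sum_add_distrib, mul_left_comm _ (x (i + 1) / c), ← mul_sum, ← hk]
      nth_rw 3 [← Nat.div_add_mod (x (i + 1)) c]
      ring

lemma eq_of_isReducedCoeffs_of_modEq (ha : 0 < a 1) {i : ℕ} {x y : ℕ → ℕ}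
    (hx : IsReducedCoeffs i a x) (hy : IsReducedCoeffs i a y)
    (h : ∑ j ∈ Icc 2 i, a j * x j ≡ ∑ j ∈ Icc 2 i, a j * y j [MOD a 1]) :
    ∀ j ∈ Icc 2 i, x j = y j := by
  induction i with
  | zero => simp
  | succ i ih =>
    rcases Nat.eq_zero_or_pos i with rfl | hi1
    · simp
    rw [sum_Icc_succ_top (by omega), sum_Icc_succ_top (by omega)] at h
    have hlow : ∀ z : ℕ → ℕ, ∑ j ∈ Icc 2 i, a j * z j ≡ 0 [MOD dseq a i] := fun z =>
      Nat.modEq_zero_iff_dvd.2 <| dvd_sum fun j hj =>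
        dvd_mul_of_dvd_left (dseq_dvd a (Icc_subset_Icc_left one_le_two hj)) _
    have htop : x (i + 1) = y (i + 1) := by
      have hmod := ((hlow x).trans (hlow y).symm).add_left_cancel
        (h.of_dvd (dseq_one a ▸ dseq_dvd_dseq a hi1))
      have hcancel := hmod.cancel_left_div_gcd (dseq_pos ha hi1)
      rw [Nat.gcd_comm, ← dseq_succ a hi1] at hcancel
      exact hcancel.eq_of_lt_of_lt (hx _ (by simp; omega)) (hy _ (by simp; omega))
    rw [htop] at h
    intro j hj
    rcases (mem_Icc.1 hj).2.eq_or_lt with rfl | hlt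
    · exact htop
    · exact ih (hx.mono (by omega)) (hy.mono (by omega)) (Nat.ModEq.add_right_cancel' _ h) j
        (mem_Icc.2 ⟨(mem_Icc.1 hj).1, by omega⟩)

lemma exists_isReducedCoeffs_eq_mul_add_sum (ha : 0 < a 1) (hm : 1 ≤ m) (hd : dseq a m = 1)
    (z : ℤ) :
    ∃ x, IsReducedCoeffs m a x ∧ ∃ t : ℤ, z = a 1 * t + ∑ j ∈ Icc 2 m, (a j * x j : ℤ) := by
  have : NeZero (a 1) := ⟨ha.ne'⟩
  let coeffs : (∀ j : Icc 2 m, Fin (dseqRatio a j)) → ℕ → ℕ :=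
    fun v j => if h : j ∈ Icc 2 m then v ⟨j, h⟩ else 0
  have hcoeffs : ∀ v, IsReducedCoeffs m a (coeffs v) := fun v j hj => by
    simpa only [coeffs, dif_pos hj] using (v ⟨j, hj⟩).isLt
  let residue : (∀ j : Icc 2 m, Fin (dseqRatio a j)) → ZMod (a 1) :=
    fun v => ((∑ j ∈ Icc 2 m, a j * coeffs v j : ℕ) : ZMod (a 1))
  have hinj : residue.Injective := fun v w hvw => by
    have := eq_of_isReducedCoeffs_of_modEq ha (hcoeffs v) (hcoeffs w)
      ((ZMod.natCast_eq_natCast_iff _ _ _).1 hvw)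
    funext j
    simpa only [coeffs, dif_pos j.2, Fin.val_inj] using this j j.2
  have hcard : Fintype.card (∀ j : Icc 2 m, Fin (dseqRatio a j)) = Fintype.card (ZMod (a 1)) := by
    rw [Fintype.card_pi, ZMod.card, ← prod_dseqRatio_mul_dseq (a := a) hm, hd, mul_one]
    simp only [Fintype.card_fin]
    exact prod_coe_sort (Icc 2 m) (dseqRatio a)
  obtain ⟨v, hv⟩ := ((Fintype.bijective_iff_injective_and_card residue).2 ⟨hinj, hcard⟩).2 z
  obtain ⟨t, ht⟩ := (ZMod.intCast_eq_intCast_iff_dvd_sub _ z (a 1)).1 (by rwa [Int.cast_natCast])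
  exact ⟨coeffs v, hcoeffs v, t, by push_cast at ht; linarith⟩

/-- Membership in `S`, as a predicate on `ℤ`. -/
def IsRepresentable (m : ℕ) (a : ℕ → ℕ) (z : ℤ) : Prop :=
  ∃ x : ℕ → ℕ, z = ((∑ i ∈ Icc 1 m, a i * x i : ℕ) : ℤ)

lemma IsRepresentable.nonneg {z : ℤ} (hz : IsRepresentable m a z) : 0 ≤ z := by
  obtain ⟨x, rfl⟩ := hz
  positivity

lemma isRepresentable_zero : IsRepresentable m a 0 :=
  ⟨0, by simp⟩

lemma isRepresentable_natCast_iff (n : ℕ) :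
    IsRepresentable m a n ↔ ∃ x : ℕ → ℕ, n = ∑ i ∈ Icc 1 m, a i * x i := by
  simp only [IsRepresentable, Nat.cast_inj]

lemma Telescopic.isRepresentable_iff_nonneg (htel : Telescopic m a) (ha : 0 < a 1) (hm : 1 ≤ m)
    {x : ℕ → ℕ} (hx : IsReducedCoeffs m a x) {t z : ℤ}
    (hz : z = a 1 * t + ∑ j ∈ Icc 2 m, (a j * x j : ℤ)) : IsRepresentable m a z ↔ 0 ≤ t := by
  constructor
  · rintro ⟨y, rfl⟩
    obtain ⟨y', hy', hsum⟩ := htel.exists_isReducedCoeffs_sum_eq ha le_rfl y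
    rw [← hsum, sum_Icc_one_eq_add _ hm] at hz
    push_cast at hz
    have hmod : ∑ j ∈ Icc 2 m, a j * y' j ≡ ∑ j ∈ Icc 2 m, a j * x j [MOD a 1] :=
      Nat.modEq_iff_dvd.2 ⟨y' 1 - t, by push_cast; linarith⟩
    have hxy : ∑ j ∈ Icc 2 m, (a j * y' j : ℤ) = ∑ j ∈ Icc 2 m, (a j * x j : ℤ) :=
      sum_congr rfl fun j hj => by rw [eq_of_isReducedCoeffs_of_modEq ha hy' hx hmod j hj]
    have ht : (a 1 : ℤ) * t = a 1 * y' 1 := by linarith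
    rw [mul_left_cancel₀ (by positivity) ht]
    positivity
  · intro ht
    refine ⟨Function.update x 1 t.toNat, ?_⟩
    rw [sum_Icc_one_eq_add _ hm, Function.update_self,
      sum_congr rfl fun j hj => by rw [Function.update_of_ne (by simp at hj; omega)]]
    push_cast
    rw [Int.toNat_of_nonneg ht, hz]

def telescopicFrobenius (m : ℕ) (a : ℕ → ℕ) : ℤ :=
  ∑ j ∈ Icc 2 m, (a j : ℤ) * (dseqRatio a j - 1) - a 1

lemma Telescopic.isRepresentable_iff_not_sub (htel : Telescopic m a) (ha : 0 < a 1) (hm : 1 ≤ m)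
    (hd : dseq a m = 1) (z : ℤ) :
    IsRepresentable m a z ↔ ¬ IsRepresentable m a (telescopicFrobenius m a - z) := by
  obtain ⟨x, hx, t, hz⟩ := exists_isReducedCoeffs_eq_mul_add_sum ha hm hd z
  have hx' : IsReducedCoeffs m a fun j => dseqRatio a j - 1 - x j := fun j hj => by
    have := hx j hj
    dsimp only
    omega
  have hcompl : telescopicFrobenius m a - z =
      a 1 * (-1 - t) + ∑ j ∈ Icc 2 m, (a j * (dseqRatio a j - 1 - x j : ℕ) : ℤ) := by
    have hcast : ∀ j ∈ Icc 2 m, (a j * (dseqRatio a j - 1 - x j : ℕ) : ℤ) =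
        a j * (dseqRatio a j - 1) - a j * x j := fun j hj => by
      have := hx j hj
      rw [← mul_sub]
      congr 1
      omega
    rw [hz, telescopicFrobenius, sum_congr rfl hcast, sum_sub_distrib]
    ring
  rw [htel.isRepresentable_iff_nonneg ha hm hx hz, htel.isRepresentable_iff_nonneg ha hm hx' hcompl]
  omega

end

/-- For a telescopic sequence with `g ≥ 1` gaps, the largest gap of the
numerical semigroup `S = a_1 ℤ_{≥0} + ⋯ + a_m ℤ_{≥0}` equals `2g - 1`. -/
theorem telescopic_largest_gap
    (m : ℕ) (hm : 2 ≤ m) (a : ℕ → ℕ)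
    (hpos : ∀ i, 1 ≤ i → i ≤ m → 0 < a i)
    (hgcd : (Finset.Icc 1 m).gcd a = 1)
    (htel : Telescopic m a)
    (g : ℕ)
    (hg : g = Set.ncard {n : ℕ | ¬ ∃ x : ℕ → ℕ, n = ∑ i ∈ Finset.Icc 1 m, a i * x i})
    (hg1 : 1 ≤ g) :
    IsGreatest {n : ℕ | ¬ ∃ x : ℕ → ℕ, n = ∑ i ∈ Finset.Icc 1 m, a i * x i}
      (2 * g - 1) := by
  have ha : 0 < a 1 := hpos 1 le_rfl (by omega)
  simp only [← isRepresentable_natCast_iff] at hg ⊢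
  subst hg
  exact isGreatest_two_mul_ncard_sub_one (telescopicFrobenius m a)
    (htel.isRepresentable_iff_not_sub ha (by omega) hgcd) (fun _ => IsRepresentable.nonneg)
    isRepresentable_zero (Set.nonempty_of_ncard_ne_zero (by omega))
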